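/- A d-tiling T is proper if and only if for any two intersecting boxes A, B of T ∪ T_ext we have dim(A ∩ B) = d − 1. -/

import Mathlib

/- Common framework: axis-parallel boxes (with extended-real endpoints, to
accommodate the unbounded exterior boxes of `T_ext`), `d`-tilings of the cube
`[-1,1]^d`, the exterior boxes, proper tilings, slices, cuts, sides and
separations. -/

noncomputable section

open Classical

attribute [local instance] Classical.propDecidable

/-- A `d`-box, given by the lower and upper endpoints of its coordinate
intervals (extended reals, so that the unbounded exterior boxes are covered).
The interval in coordinate `i` is `[lo i, hi i]`. -/
structure Box (d : ℕ) where
  lo : Fin d → EReal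
  hi : Fin d → EReal

namespace Box

variable {d : ℕ}

/-- Membership of a (real) point in a box. -/
def mem (B : Box d) (p : Fin d → ℝ) : Prop :=
  ∀ i, B.lo i ≤ (p i : EReal) ∧ (p i : EReal) ≤ B.hi i

/-- The set of real points of a box. -/
def toSet (B : Box d) : Set (Fin d → ℝ) := {p | B.mem p}

/-- The interior of a box (for full-dimensional boxes). -/
def interior (B : Box d) : Set (Fin d → ℝ) :=
  {p | ∀ i, B.lo i < (p i : EReal) ∧ (p i : EReal) < B.hi i}

/-- The dimension of a box: the number of non-degenerate coordinate
intervals. -/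
def dim (B : Box d) : ℕ :=
  (Finset.univ.filter fun i => B.lo i < B.hi i).card

/-- A box is full-dimensional (`d`-dimensional) if all of its coordinate
intervals are non-degenerate. -/
def FullDim (B : Box d) : Prop := ∀ i, B.lo i < B.hi i

end Box

/-- Two boxes intersect when they share a (real) point. -/
def Intersects {d : ℕ} (A B : Box d) : Prop := (A.toSet ∩ B.toSet).Nonempty

/-- The dimension of the intersection `A ∩ B` of two boxes: the number of
coordinates `i` where the interval `A_i ∩ B_i` is non-degenerate. -/
def interDim {d : ℕ} (A B : Box d) : ℕ :=
  (Finset.univ.filter fun i =>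
    max (A.lo i) (B.lo i) < min (A.hi i) (B.hi i)).card

/-- Two intersecting boxes touch in dimension `i` when `A_i ∩ B_i` is
degenerate. -/
def Touch {d : ℕ} (A B : Box d) (i : Fin d) : Prop :=
  Intersects A B ∧ max (A.lo i) (B.lo i) = min (A.hi i) (B.hi i)

/-- The cube `[-1,1]^d`. -/
def cube (d : ℕ) : Set (Fin d → ℝ) := {p | ∀ i, -1 ≤ p i ∧ p i ≤ 1}

/-- A `d`-tiling: a finite collection of full-dimensional `d`-boxes contained
in `[-1,1]^d`, with pairwise disjoint interiors, whose union is `[-1,1]^d`. -/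
def IsTiling {d : ℕ} (𝒯 : Finset (Box d)) : Prop :=
  (∀ B ∈ 𝒯, B.FullDim) ∧
  (∀ B ∈ 𝒯, B.toSet ⊆ cube d) ∧
  (∀ A ∈ 𝒯, ∀ B ∈ 𝒯, A ≠ B → A.interior ∩ B.interior = ∅) ∧
  (∀ p ∈ cube d, ∃ B ∈ 𝒯, B.mem p)

/-- The exterior box `T(i,-)` (for `s = false`) resp. `T(i,+)`
(for `s = true`). -/
def extBox (d : ℕ) (i : Fin d) (s : Bool) : Box d where
  lo j := if j < i then ((-1 : ℝ) : EReal)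
          else if j = i then (if s then ((1 : ℝ) : EReal) else ⊥) else ⊥
  hi j := if j < i then ((1 : ℝ) : EReal)
          else if j = i then (if s then ⊤ else ((-1 : ℝ) : EReal)) else ⊤

/-- The family `T_ext` of the `2d` exterior boxes. -/
def extBoxes (d : ℕ) : Finset (Box d) :=
  (Finset.univ : Finset (Fin d × Bool)).image fun q => extBox d q.1 q.2

/-- The collection `T ∪ T_ext`. -/
def withExt {d : ℕ} (𝒯 : Finset (Box d)) : Finset (Box d) := 𝒯 ∪ extBoxes d

/-- A `d`-tiling is proper when every point of `ℝ^d` belongs to at most `d+1`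
boxes of `T ∪ T_ext`. -/
def Proper {d : ℕ} (𝒯 : Finset (Box d)) : Prop :=
  ∀ p : Fin d → ℝ, ((withExt 𝒯).filter fun B => B.mem p).card ≤ d + 1

/-- The hyperplane `H^(i)_x` is generic w.r.t. `𝒯` when `x` is not an endpoint
of the `i`-th interval of any box of `𝒯`. -/
def Generic {d : ℕ} (𝒯 : Finset (Box d)) (i : Fin d) (x : ℝ) : Prop :=
  ∀ B ∈ 𝒯, (x : EReal) ≠ B.lo i ∧ (x : EReal) ≠ B.hi i

/-- The slice `B|^(i)_x` of a box `B` by the hyperplane `H^(i)_x`, regarded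
as a box of `ℝ^d` by omitting coordinate `i`. -/
def sliceBox {d : ℕ} (B : Box (d + 1)) (i : Fin (d + 1)) : Box d where
  lo j := B.lo (i.succAbove j)
  hi j := B.hi (i.succAbove j)

/-- The slice `T|^(i)_x` of a tiling by the hyperplane `H^(i)_x`. -/
def sliceT {d : ℕ} (𝒯 : Finset (Box (d + 1))) (i : Fin (d + 1)) (x : ℝ) :
    Finset (Box d) :=
  (𝒯.filter fun B => B.lo i ≤ (x : EReal) ∧ (x : EReal) ≤ B.hi i).image
    fun B => sliceBox B i

/-- The box `B|^(i)-_x` (the nontrivial cases: if `B_i^+ < x` it is `B`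
itself, and if `B_i^- < x ≤ B_i^+` the interval `B_i` is replaced by
`[B_i^-, 1]`; the empty case `x ≤ B_i^-` is filtered out in `cutMinus`). -/
def cutMinusBox {d : ℕ} (B : Box d) (i : Fin d) (x : ℝ) : Box d :=
  if B.hi i < (x : EReal) then B
  else ⟨B.lo, Function.update B.hi i ((1 : ℝ) : EReal)⟩

/-- The box `B|^(i)+_x` (the nontrivial cases: if `x < B_i^-` it is `B`
itself, and if `B_i^- ≤ x < B_i^+` the interval `B_i` is replaced by
`[-1, B_i^+]`; the empty case `B_i^+ ≤ x` is filtered out in `cutPlus`). -/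
def cutPlusBox {d : ℕ} (B : Box d) (i : Fin d) (x : ℝ) : Box d :=
  if (x : EReal) < B.lo i then B
  else ⟨Function.update B.lo i ((-1 : ℝ) : EReal), B.hi⟩

/-- The collection `T|^(i)-_x` of nonempty boxes `B|^(i)-_x`, `B ∈ T`. -/
def cutMinus {d : ℕ} (𝒯 : Finset (Box d)) (i : Fin d) (x : ℝ) :
    Finset (Box d) :=
  (𝒯.filter fun B => B.lo i < (x : EReal)).image fun B => cutMinusBox B i x

/-- The collection `T|^(i)+_x` of nonempty boxes `B|^(i)+_x`, `B ∈ T`. -/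
def cutPlus {d : ℕ} (𝒯 : Finset (Box d)) (i : Fin d) (x : ℝ) :
    Finset (Box d) :=
  (𝒯.filter fun B => (x : EReal) < B.hi i).image fun B => cutPlusBox B i x

/-- The side `S(B,i,-)` (for `s = false`) resp. `S(B,i,+)` (for `s = true`)
of a box `B`. -/
def sideBox {d : ℕ} (B : Box d) (i : Fin d) (s : Bool) : Box d where
  lo j := if j = i then (if s then B.hi i else B.lo i) else B.lo j
  hi j := if j = i then (if s then B.hi i else B.lo i) else B.hi j

/-- The set of all sides of boxes of `T ∪ T_ext`. -/
def sides {d : ℕ} (𝒯 : Finset (Box d)) : Finset (Box d) :=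
  ((withExt 𝒯) ×ˢ (Finset.univ : Finset (Fin d × Bool))).image
    fun q => sideBox q.1 q.2.1 q.2.2

/-- Two sides are linked when they intersect on a `(d-1)`-dimensional box. -/
def Linked {d : ℕ} (S S' : Box d) : Prop :=
  Intersects S S' ∧ interDim S S' = d - 1

/-- The linking relation, restricted to the sides of `T ∪ T_ext`. -/
def linkRel {d : ℕ} (𝒯 : Finset (Box d)) (S S' : Box d) : Prop :=
  S ∈ sides 𝒯 ∧ S' ∈ sides 𝒯 ∧ Linked S S'

/-- The `∼`-equivalence class of a side (sides reachable by chains of linked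
sides). -/
def sepClass {d : ℕ} (𝒯 : Finset (Box d)) (S₀ : Box d) : Set (Box d) :=
  {S | Relation.ReflTransGen (linkRel 𝒯) S₀ S}

/-- The separation generated by a side `S₀`: the union of the sides in its
`∼`-equivalence class. -/
def sepSet {d : ℕ} (𝒯 : Finset (Box d)) (S₀ : Box d) : Set (Fin d → ℝ) :=
  ⋃ S ∈ sepClass 𝒯 S₀, S.toSet

/-- `S` is degenerate in dimension `i` with value `x`, i.e. it is contained in
the hyperplane `H^(i)_x`. -/
def DegenAt {d : ℕ} (S : Box d) (i : Fin d) (x : ℝ) : Prop :=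
  S.lo i = (x : EReal) ∧ S.hi i = (x : EReal)

/-- A tiling is in general position when no two distinct separations are
coplanar: any two sides whose separations lie in a common hyperplane
`H^(i)_x` are `∼`-equivalent. -/
def GeneralPosition {d : ℕ} (𝒯 : Finset (Box d)) : Prop :=
  ∀ S₀ ∈ sides 𝒯, ∀ S₁ ∈ sides 𝒯, ∀ (i : Fin d) (x : ℝ),
    DegenAt S₀ i x → DegenAt S₁ i x →
      Relation.ReflTransGen (linkRel 𝒯) S₀ S₁

/-- The dimension of the intersection `⋂_{B ∈ 𝓑} B` of a finite family of
boxes: the number of coordinates where the intersected interval is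
non-degenerate. -/
def interDimAll {d : ℕ} (𝓑 : Finset (Box d)) : ℕ :=
  (Finset.univ.filter fun i =>
    𝓑.sup (fun B => B.lo i) < 𝓑.inf (fun B => B.hi i)).card

/-- The digraph `G(T)`: an arc from `A` to `B` (for distinct `A, B ∈ T`) iff
`B_i^- < A_i^+` for all `i`. -/
def tilingArc {d : ℕ} (𝒯 : Finset (Box d)) (A B : Box d) : Prop :=
  A ∈ 𝒯 ∧ B ∈ 𝒯 ∧ A ≠ B ∧ ∀ i, B.lo i < A.hi i

/-!
Together with the exterior boxes, a tiling tiles all of `ℝ^d` by full-dimensional boxes. Two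
boxes containing a point `p` meet in dimension `d - 1` exactly when they touch at `p`, from
opposite sides, in a single coordinate. So if all intersecting pairs meet in dimension `d - 1`,
the `d` coordinates partition the complete graph on the boxes at `p` into complete bipartite
graphs (lower face through `p` against upper face through `p`), and the Graham–Pollak theorem
bounds their number by `d + 1`.

Conversely, let two tiles `A`, `B` touch in a set `D` of at least two coordinates, at a point `p`
that is generic in the other coordinates. The orthants at `p` obtained from the one of `A` by
flipping a single coordinate of `D` need `#D` further boxes, and pushing `p` in each remaining
coordinate up to the nearest upper face of a box through it adds one more box each time: some
point lies in `d + 2` boxes. Pairs involving exterior boxes are checked directly.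
-/

open Finset Filter Topology

/-- Graham–Pollak, by Tverberg's argument: the vectors `v i = (1, (𝟙[L k i])ₖ)` are linearly
independent, since a relation `x` has `∑ i, x i = 0` and `a k = 0` for all `k`, while
`(∑ i, x i) ^ 2 = ∑ i, x i ^ 2 + 2 * ∑ k, a k * b k`. -/
theorem card_le_card_add_one_of_biclique_partition {ι κ : Type*} [Fintype ι] [Fintype κ]
    (L H : κ → ι → Prop) (hLH : ∀ k i, ¬ (L k i ∧ H k i))
    (hpart : ∀ i j, i ≠ j → ∃! k, (L k i ∧ H k j) ∨ (H k i ∧ L k j)) :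
    Fintype.card ι ≤ Fintype.card κ + 1 := by
  let v : ι → Option κ → ℝ := fun i o => o.elim 1 fun k => if L k i then 1 else 0
  suffices LinearIndependent ℝ v by simpa using this.fintype_card_le_finrank
  rw [Fintype.linearIndependent_iff]
  intro x hx
  set a : κ → ℝ := fun k => ∑ i, if L k i then x i else 0
  set b : κ → ℝ := fun k => ∑ i, if H k i then x i else 0
  have hsum : ∑ i, x i = 0 := by simpa [v] using congrFun hx none
  have ha : ∀ k, a k = 0 := fun k => by simpa [v, a] using congrFun hx (some k)
  have hterm : ∀ k i j, (if (L k i ∧ H k j) ∨ (H k i ∧ L k j) then x i * x j else 0) =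
      (if L k i then x i else 0) * (if H k j then x j else 0) +
        (if H k i then x i else 0) * (if L k j then x j else 0) := by
    intro k i j
    have := hLH k i
    have := hLH k j
    by_cases L k i <;> by_cases H k i <;> by_cases L k j <;> by_cases H k j <;> simp_all
  have hprod : ∀ i j, x i * x j = (if i = j then x i * x j else 0) +
      ∑ k, if (L k i ∧ H k j) ∨ (H k i ∧ L k j) then x i * x j else 0 := by
    intro i j
    by_cases hij : i = j
    · subst hij
      rw [if_pos rfl, left_eq_add]
      exact sum_eq_zero fun k _ => if_neg fun h => h.elim (hLH k i) fun h' => hLH k i h'.symm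
    · rw [if_neg hij, zero_add, ← sum_filter, sum_const,
        (Fintype.existsUnique_iff_card_one _).1 (hpart i j hij), one_smul]
  have hexpand : (∑ i, x i) * (∑ j, x j) = ∑ i, x i * x i + ∑ k, (a k * b k + b k * a k) := by
    calc (∑ i, x i) * (∑ j, x j)
        = ∑ i, ∑ j, ((if i = j then x i * x j else 0) +
            ∑ k, if (L k i ∧ H k j) ∨ (H k i ∧ L k j) then x i * x j else 0) := by
          rw [sum_mul_sum]; exact sum_congr rfl fun i _ => sum_congr rfl fun j _ => hprod i j
      _ = ∑ i, x i * x i + ∑ k, ∑ i, ∑ j,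
            (if (L k i ∧ H k j) ∨ (H k i ∧ L k j) then x i * x j else 0) := by
          simp only [sum_add_distrib, sum_ite_eq, if_pos (mem_univ _)]
          exact congrArg _ ((sum_congr rfl fun _ _ => sum_comm).trans sum_comm)
      _ = ∑ i, x i * x i + ∑ k, (a k * b k + b k * a k) := by
          simp only [hterm, sum_add_distrib, a, b, sum_mul_sum]
  have hsq : ∑ i, x i * x i = 0 := by
    simpa [hsum, ha] using hexpand.symm
  intro i
  exact mul_self_eq_zero.1 ((sum_eq_zero_iff_of_nonneg fun i _ => mul_self_nonneg (x i)).1 hsq i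
    (mem_univ i))

section Boxes

variable {d : ℕ}

namespace Box

theorem isClosed_toSet (B : Box d) : IsClosed B.toSet := by
  have hcoord : ∀ i, Continuous fun p : Fin d → ℝ => ((p i : ℝ) : EReal) :=
    fun i => continuous_coe_real_ereal.comp (continuous_apply i)
  simp only [toSet, mem, Set.ofPred_forall, Set.ofPred_and]
  exact isClosed_iInter fun i =>
    (isClosed_le continuous_const (hcoord i)).inter (isClosed_le (hcoord i) continuous_const)

theorem interior_subset_toSet (B : Box d) : B.interior ⊆ B.toSet :=
  fun _ hz i => ⟨(hz i).1.le, (hz i).2.le⟩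

theorem mem_update {B : Box d} {z : Fin d → ℝ} (hz : B.mem z) {c : Fin d} {y : ℝ}
    (hlo : B.lo c ≤ y) (hhi : (y : EReal) ≤ B.hi c) : B.mem (Function.update z c y) := by
  intro i
  rcases eq_or_ne i c with rfl | hi
  · simpa using ⟨hlo, hhi⟩
  · simpa [Function.update_of_ne hi] using hz i

theorem FullDim.exists_mem {B : Box d} (hB : B.FullDim) : ∃ z, B.mem z := by
  choose z hz using fun i => EReal.exists_between_coe_real (hB i)
  exact ⟨z, fun i => ⟨(hz i).1.le, (hz i).2.le⟩⟩

end Box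

theorem Intersects.symm {A B : Box d} (h : Intersects A B) : Intersects B A :=
  let ⟨p, hA, hB⟩ := h
  ⟨p, hB, hA⟩

theorem interDim_comm (A B : Box d) : interDim A B = interDim B A := by
  simp only [interDim, max_comm (A.lo _), min_comm (A.hi _)]

theorem Intersects.max_lo_le_min_hi {A B : Box d} (h : Intersects A B) (k : Fin d) :
    max (A.lo k) (B.lo k) ≤ min (A.hi k) (B.hi k) :=
  let ⟨_, hA, hB⟩ := h
  (max_le (hA k).1 (hB k).1).trans (le_min (hA k).2 (hB k).2)

theorem Intersects.touch_iff {A B : Box d} (h : Intersects A B) (k : Fin d) :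
    Touch A B k ↔ ¬ max (A.lo k) (B.lo k) < min (A.hi k) (B.hi k) := by
  rw [Touch, and_iff_right h, not_lt]
  exact ⟨ge_of_eq, (h.max_lo_le_min_hi k).antisymm⟩

theorem Intersects.interDim_add_card_touch {A B : Box d} (h : Intersects A B) :
    interDim A B + #(univ.filter (Touch A B)) = d := by
  rw [interDim, filter_congr fun k _ => h.touch_iff k, card_filter_add_card_filter_not,
    card_univ, Fintype.card_fin]

def TouchAt (p : Fin d → ℝ) (C C' : Box d) (k : Fin d) : Prop :=
  (C.lo k = p k ∧ C'.hi k = p k) ∨ (C.hi k = p k ∧ C'.lo k = p k)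

theorem touch_iff_touchAt {C C' : Box d} (hC : C.FullDim) (hC' : C'.FullDim) {p : Fin d → ℝ}
    (hpC : C.mem p) (hpC' : C'.mem p) (k : Fin d) : Touch C C' k ↔ TouchAt p C C' k := by
  have hmax : max (C.lo k) (C'.lo k) ≤ p k := max_le (hpC k).1 (hpC' k).1
  have hmin : (p k : EReal) ≤ min (C.hi k) (C'.hi k) := le_min (hpC k).2 (hpC' k).2
  constructor
  · rintro ⟨-, heq⟩
    have h1 : max (C.lo k) (C'.lo k) = p k := hmax.antisymm (heq ▸ hmin)
    have h2 : min (C.hi k) (C'.hi k) = p k := heq ▸ h1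
    rcases max_eq_iff.1 h1 with ⟨hl, -⟩ | ⟨hl, -⟩ <;>
      rcases min_eq_iff.1 h2 with ⟨hh, -⟩ | ⟨hh, -⟩
    · exact absurd (hC k) (by rw [hl, hh]; exact lt_irrefl _)
    · exact Or.inl ⟨hl, hh⟩
    · exact Or.inr ⟨hh, hl⟩
    · exact absurd (hC' k) (by rw [hl, hh]; exact lt_irrefl _)
  · intro h
    refine ⟨⟨p, hpC, hpC'⟩, ?_⟩
    rcases h with ⟨hl, hh⟩ | ⟨hh, hl⟩
    · rw [hmax.antisymm (le_max_of_le_left hl.ge), (min_le_of_right_le hh.le).antisymm hmin]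
    · rw [hmax.antisymm (le_max_of_le_right hl.ge), (min_le_of_left_le hh.le).antisymm hmin]

def Box.OpenToward (C : Box d) (p : Fin d → ℝ) (c : Fin d) (b : Bool) : Prop :=
  if b then (p c : EReal) < C.hi c else C.lo c < p c

/-- For `C` containing `p`: `C` contains `p + t • u` for small `t > 0`, where `u c = 1` if `σ c`
and `u c = -1` otherwise. -/
def Box.CoversOrthant (C : Box d) (p : Fin d → ℝ) (σ : Fin d → Bool) : Prop :=
  ∀ c, C.OpenToward p c (σ c)

theorem Box.FullDim.exists_coversOrthant {C : Box d} (hC : C.FullDim) {p : Fin d → ℝ}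
    (hp : C.mem p) : ∃ σ, C.CoversOrthant p σ := by
  refine ⟨fun c => decide ((p c : EReal) < C.hi c), fun c => ?_⟩
  by_cases h : (p c : EReal) < C.hi c
  · simp only [Box.OpenToward, h, decide_true, if_true]
  · simp only [Box.OpenToward, h, decide_false, Bool.false_eq_true, if_false]
    simpa only [(hp c).2.antisymm (not_lt.1 h)] using hC c

theorem Box.not_openToward_not {C : Box d} {p : Fin d → ℝ} {c : Fin d}
    (hfix : C.lo c = p c ∨ C.hi c = p c) {b : Bool} (hb : C.OpenToward p c b) :
    ¬ C.OpenToward p c (!b) := by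
  cases b <;> rcases hfix with h | h <;> simp_all [Box.OpenToward]

theorem TouchAt.not_openToward {C C' : Box d} {p : Fin d → ℝ} {c : Fin d}
    (h : TouchAt p C C' c) {b : Bool} (hb : C.OpenToward p c b) : ¬ C'.OpenToward p c b := by
  cases b <;> rcases h with ⟨h₁, h₂⟩ | ⟨h₁, h₂⟩ <;> simp_all [Box.OpenToward]

end Boxes

section SpaceTiling

variable {d : ℕ}

structure IsSpaceTiling (𝒦 : Finset (Box d)) : Prop where
  fullDim : ∀ B ∈ 𝒦, B.FullDim
  disjoint_interior : ∀ A ∈ 𝒦, ∀ B ∈ 𝒦, A ≠ B → Disjoint A.interior B.interior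
  exists_mem : ∀ p, ∃ B ∈ 𝒦, B.mem p

def boxesAt (𝒦 : Finset (Box d)) (p : Fin d → ℝ) : Finset (Box d) :=
  𝒦.filter fun B => B.mem p

theorem mem_boxesAt {𝒦 : Finset (Box d)} {p : Fin d → ℝ} {B : Box d} :
    B ∈ boxesAt 𝒦 p ↔ B ∈ 𝒦 ∧ B.mem p :=
  mem_filter

theorem eventually_boxesAt_subset (𝒦 : Finset (Box d)) (p : Fin d → ℝ) :
    ∀ᶠ z in 𝓝 p, boxesAt 𝒦 z ⊆ boxesAt 𝒦 p := by
  have : ∀ᶠ z in 𝓝 p, ∀ B ∈ 𝒦, B.mem z → B.mem p := by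
    refine (eventually_all_finset 𝒦).2 fun B _ => ?_
    by_cases hB : B.mem p
    · exact Filter.Eventually.of_forall fun _ _ => hB
    · filter_upwards [B.isClosed_toSet.isOpen_compl.mem_nhds hB] with z hz hzB using absurd hzB hz
  filter_upwards [this] with z hz B hB
  rw [mem_boxesAt] at hB ⊢
  exact ⟨hB.1, hz B hB.1 hB.2⟩

theorem exists_generic_between (𝒦 : Finset (Box d)) (c : Fin d) {a b : EReal} (hab : a < b) :
    ∃ x : ℝ, a < x ∧ (x : EReal) < b ∧ Generic 𝒦 c x := by
  obtain ⟨x₁, hax₁, hx₁b⟩ := EReal.exists_between_coe_real hab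
  obtain ⟨x₂, hx₁₂, hx₂b⟩ := EReal.exists_between_coe_real hx₁b
  obtain ⟨x, hx, hxt⟩ := (Set.Ioo_infinite (EReal.coe_lt_coe_iff.1 hx₁₂)).exists_notMem_finset
    (𝒦.image (fun B => (B.lo c).toReal) ∪ 𝒦.image (fun B => (B.hi c).toReal))
  refine ⟨x, hax₁.trans (EReal.coe_lt_coe_iff.2 hx.1), (EReal.coe_lt_coe_iff.2 hx.2).trans hx₂b,
    fun B hB => ⟨fun h => hxt ?_, fun h => hxt ?_⟩⟩
  · exact mem_union_left _ (mem_image.2 ⟨B, hB, by rw [← h, EReal.toReal_coe]⟩)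
  · exact mem_union_right _ (mem_image.2 ⟨B, hB, by rw [← h, EReal.toReal_coe]⟩)

theorem Intersects.exists_generic_mem (𝒦 : Finset (Box d)) {A B : Box d} (h : Intersects A B) :
    ∃ p, A.mem p ∧ B.mem p ∧ ∀ c, ¬ Touch A B c → Generic 𝒦 c (p c) := by
  obtain ⟨q, hqA, hqB⟩ := h
  have hcoord : ∀ c, ∃ x : ℝ, max (A.lo c) (B.lo c) ≤ x ∧ (x : EReal) ≤ min (A.hi c) (B.hi c) ∧
      (¬ Touch A B c → Generic 𝒦 c x) := by
    intro c
    by_cases hc : Touch A B c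
    · exact ⟨q c, max_le (hqA c).1 (hqB c).1, le_min (hqA c).2 (hqB c).2, absurd hc⟩
    · obtain ⟨x, h1, h2, h3⟩ :=
        exists_generic_between 𝒦 c (not_not.1 (mt (Intersects.touch_iff ⟨q, hqA, hqB⟩ c).2 hc))
      exact ⟨x, h1.le, h2.le, fun _ => h3⟩
  choose p hlo hhi hgen using hcoord
  exact ⟨p, fun c => ⟨le_of_max_le_left (hlo c), (hhi c).trans (min_le_left _ _)⟩,
    fun c => ⟨le_of_max_le_right (hlo c), (hhi c).trans (min_le_right _ _)⟩, hgen⟩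

namespace IsSpaceTiling

variable {𝒦 : Finset (Box d)}

theorem eq_of_forall_max_lt_min (h𝒦 : IsSpaceTiling 𝒦) {A B : Box d} (hA : A ∈ 𝒦) (hB : B ∈ 𝒦)
    (h : ∀ c, max (A.lo c) (B.lo c) < min (A.hi c) (B.hi c)) : A = B := by
  by_contra hne
  choose z hz using fun c => EReal.exists_between_coe_real (h c)
  exact Set.disjoint_left.1 (h𝒦.disjoint_interior A hA B hB hne)
    (fun c => ⟨(le_max_left _ _).trans_lt (hz c).1, (hz c).2.trans_le (min_le_left _ _)⟩)
    (fun c => ⟨(le_max_right _ _).trans_lt (hz c).1, (hz c).2.trans_le (min_le_right _ _)⟩)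

theorem one_le_card_touch (h𝒦 : IsSpaceTiling 𝒦) {A B : Box d} (hA : A ∈ 𝒦) (hB : B ∈ 𝒦)
    (hne : A ≠ B) (h : Intersects A B) : 1 ≤ #(univ.filter (Touch A B)) := by
  obtain ⟨c, hc⟩ : ∃ c, ¬ max (A.lo c) (B.lo c) < min (A.hi c) (B.hi c) := by
    by_contra! hall
    exact hne (h𝒦.eq_of_forall_max_lt_min hA hB hall)
  exact one_le_card.2 ⟨c, mem_filter.2 ⟨mem_univ c, (h.touch_iff c).2 hc⟩⟩

theorem eq_of_coversOrthant (h𝒦 : IsSpaceTiling 𝒦) {A B : Box d} {p : Fin d → ℝ}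
    (hA : A ∈ boxesAt 𝒦 p) (hB : B ∈ boxesAt 𝒦 p) {σ : Fin d → Bool}
    (hAσ : A.CoversOrthant p σ) (hBσ : B.CoversOrthant p σ) : A = B := by
  rw [mem_boxesAt] at hA hB
  refine h𝒦.eq_of_forall_max_lt_min hA.1 hB.1 fun c => ?_
  have hA' := hAσ c
  have hB' := hBσ c
  cases hσ : σ c <;> simp only [Box.OpenToward, hσ] at hA' hB'
  · exact (max_lt hA' hB').trans_le (le_min (hA.2 c).2 (hB.2 c).2)
  · exact (max_le (hA.2 c).1 (hB.2 c).1).trans_lt (lt_min hA' hB')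

theorem exists_coversOrthant (h𝒦 : IsSpaceTiling 𝒦) (p : Fin d → ℝ) (σ : Fin d → Bool) :
    ∃ C ∈ boxesAt 𝒦 p, C.CoversOrthant p σ := by
  set u : Fin d → ℝ := fun c => if σ c then 1 else -1
  have hlim : Tendsto (fun t : ℝ => p + t • u) (𝓝[>] 0) (𝓝 p) := by
    have hcont : Continuous fun t : ℝ => p + t • u := by fun_prop
    exact tendsto_nhdsWithin_of_tendsto_nhds (hcont.tendsto' 0 p (by simp))
  obtain ⟨t, hsub, ht⟩ :=
    ((hlim.eventually (eventually_boxesAt_subset 𝒦 p)).and self_mem_nhdsWithin).exists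
  obtain ⟨C, hC, hCt⟩ := h𝒦.exists_mem (p + t • u)
  refine ⟨C, hsub (mem_boxesAt.2 ⟨hC, hCt⟩), fun c => ?_⟩
  have hc := hCt c
  have ht' : (0 : ℝ) < t := ht
  cases hσ : σ c <;> simp only [Box.OpenToward, u, hσ, Pi.add_apply, Pi.smul_apply, smul_eq_mul,
    Bool.false_eq_true, if_true, if_false] at hc ⊢
  · exact hc.1.trans_lt (EReal.coe_lt_coe_iff.2 (by linarith))
  · exact (EReal.coe_lt_coe_iff.2 (by linarith)).trans_le hc.2

theorem exists_boxesAt_ssubset (h𝒦 : IsSpaceTiling 𝒦) {z : Fin d → ℝ} {l : Fin d}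
    (hgen : Generic 𝒦 l (z l)) {A : Box d} (hA : A ∈ boxesAt 𝒦 z) (hAl : A.hi l ≠ ⊤) :
    ∃ r : ℝ, boxesAt 𝒦 z ⊂ boxesAt 𝒦 (Function.update z l r) := by
  have hlt : ∀ C ∈ boxesAt 𝒦 z, (z l : EReal) < C.hi l := fun C hC =>
    ((mem_boxesAt.1 hC).2 l).2.lt_of_ne (hgen C (mem_boxesAt.1 hC).1).2
  obtain ⟨C₀, hC₀, hmin⟩ := (boxesAt 𝒦 z).exists_min_image (fun C => C.hi l) ⟨A, hA⟩
  set r := (C₀.hi l).toReal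
  have hr : C₀.hi l = r :=
    (EReal.coe_toReal ((hmin A hA).trans_lt (lt_top_iff_ne_top.2 hAl)).ne
      (hlt C₀ hC₀).ne_bot).symm
  have hzr : (z l : EReal) < r := hr ▸ hlt C₀ hC₀
  set z' := Function.update z l r
  have hsub : boxesAt 𝒦 z ⊆ boxesAt 𝒦 z' := fun C hC => by
    obtain ⟨hC𝒦, hCz⟩ := mem_boxesAt.1 hC
    exact mem_boxesAt.2 ⟨hC𝒦, Box.mem_update hCz ((hCz l).1.trans hzr.le) (hr ▸ hmin C hC)⟩
  obtain ⟨σ, hσ⟩ := (h𝒦.fullDim C₀ (mem_boxesAt.1 hC₀).1).exists_coversOrthant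
    (mem_boxesAt.1 (hsub hC₀)).2
  obtain ⟨E, hE, hEσ⟩ := h𝒦.exists_coversOrthant z' (Function.update σ l true)
  refine ⟨r, (ssubset_iff_of_subset hsub).2 ⟨E, hE, fun hEz => ?_⟩⟩
  have hEl : (r : EReal) < E.hi l := by simpa [Box.OpenToward, z'] using hEσ l
  have hEC₀ : E = C₀ := by
    refine h𝒦.eq_of_coversOrthant hE (hsub hC₀) (fun c => ?_) hσ
    rcases eq_or_ne c l with rfl | hc
    · have hσc : σ c = false := by
        have := hσ c
        cases hσc : σ c <;> simp_all [Box.OpenToward, z']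
      simpa [Box.OpenToward, z', hσc] using ((mem_boxesAt.1 hEz).2 c).1.trans_lt hzr
    · simpa [Function.update_of_ne hc] using hEσ c
  exact (hr ▸ hEC₀ ▸ hEl).false

theorem exists_card_boxesAt_ge (h𝒦 : IsSpaceTiling 𝒦) {A : Box d} (hA : ∀ c, A.hi c ≠ ⊤)
    (s : Finset (Fin d)) :
    ∀ z, A ∈ boxesAt 𝒦 z → (∀ l ∈ s, Generic 𝒦 l (z l)) →
      ∃ z', #(boxesAt 𝒦 z) + #s ≤ #(boxesAt 𝒦 z') := by
  induction s using Finset.induction_on with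
  | empty => exact fun z _ _ => ⟨z, by simp⟩
  | @insert l s hl ih =>
    intro z hAz hgen
    obtain ⟨r, hr⟩ := h𝒦.exists_boxesAt_ssubset (hgen l (mem_insert_self l s)) hAz (hA l)
    obtain ⟨z', hz'⟩ := ih (Function.update z l r) (hr.subset hAz) fun l' hl' => by
      rw [Function.update_of_ne (ne_of_mem_of_not_mem hl' hl)]
      exact hgen l' (mem_insert_of_mem hl')
    refine ⟨z', ?_⟩
    have := card_lt_card hr
    rw [card_insert_of_notMem hl]
    omega

theorem card_add_two_le_card_boxesAt (h𝒦 : IsSpaceTiling 𝒦) {p : Fin d → ℝ} {A B : Box d}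
    (hA : A ∈ boxesAt 𝒦 p) (hB : B ∈ boxesAt 𝒦 p) {D : Finset (Fin d)} (hD : 2 ≤ #D)
    (hAB : ∀ k ∈ D, TouchAt p A B k) : #D + 2 ≤ #(boxesAt 𝒦 p) := by
  obtain ⟨σ, hσ⟩ := (h𝒦.fullDim A (mem_boxesAt.1 hA).1).exists_coversOrthant (mem_boxesAt.1 hA).2
  choose C hC hCσ using fun k => h𝒦.exists_coversOrthant p (Function.update σ k (!σ k))
  have hA_fix : ∀ k ∈ D, A.lo k = p k ∨ A.hi k = p k := fun k hk =>
    (hAB k hk).imp And.left And.left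
  have hCA : ∀ k ∈ D, C k ≠ A := by
    rintro k hk rfl
    exact Box.not_openToward_not (hA_fix k hk) (hσ k) (by simpa using hCσ k k)
  have hCB : ∀ k ∈ D, C k ≠ B := by
    rintro k hk hCk
    obtain ⟨k', hk', hk'k⟩ := exists_mem_ne hD k
    exact (hAB k' hk').not_openToward (hσ k') (hCk ▸ by simpa [hk'k] using hCσ k k')
  have hCinj : Set.InjOn C D := by
    intro k hk k' _ hkk'
    by_contra hne
    refine hCA k hk (h𝒦.eq_of_coversOrthant (hC k) hA (fun c => ?_) hσ)
    rcases eq_or_ne c k with rfl | hck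
    · simpa [hkk', hne] using hCσ k' c
    · simpa [hck] using hCσ k c
  have hAB_ne : A ≠ B := by
    obtain ⟨k, hk⟩ : D.Nonempty := card_pos.1 (by omega)
    rintro rfl
    exact (hAB k hk).not_openToward (hσ k) (hσ k)
  have hsub : insert A (insert B (D.image C)) ⊆ boxesAt 𝒦 p :=
    insert_subset hA (insert_subset hB (image_subset_iff.2 fun k _ => hC k))
  have hcard : #(insert A (insert B (D.image C))) = #D + 2 := by
    rw [card_insert_of_notMem, card_insert_of_notMem, card_image_of_injOn hCinj]
    · simpa using hCB
    · simpa [hAB_ne] using hCA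
  exact hcard ▸ card_le_card hsub

theorem interDim_eq_of_card_boxesAt_le (h𝒦 : IsSpaceTiling 𝒦)
    (hcard : ∀ z, #(boxesAt 𝒦 z) ≤ d + 1) {A B : Box d} (hA : A ∈ 𝒦) (hAtop : ∀ c, A.hi c ≠ ⊤)
    (hB : B ∈ 𝒦) (hne : A ≠ B) (h : Intersects A B) : interDim A B = d - 1 := by
  have hsplit := h.interDim_add_card_touch
  have hD₁ := h𝒦.one_le_card_touch hA hB hne h
  set D := univ.filter (Touch A B)
  by_contra hdim
  obtain ⟨p, hpA, hpB, hgen⟩ := h.exists_generic_mem 𝒦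
  have hAp : A ∈ boxesAt 𝒦 p := mem_boxesAt.2 ⟨hA, hpA⟩
  have hlocal := h𝒦.card_add_two_le_card_boxesAt hAp (mem_boxesAt.2 ⟨hB, hpB⟩)
    (D := D) (by omega) fun k hk =>
      (touch_iff_touchAt (h𝒦.fullDim A hA) (h𝒦.fullDim B hB) hpA hpB k).1 (mem_filter.1 hk).2
  obtain ⟨z, hz⟩ := h𝒦.exists_card_boxesAt_ge hAtop Dᶜ p hAp fun l hl =>
    hgen l (by simpa [D] using hl)
  have := hcard z
  have := card_add_card_compl D
  simp only [Fintype.card_fin] at this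
  omega

theorem card_boxesAt_le (h𝒦 : IsSpaceTiling 𝒦)
    (h : ∀ A ∈ 𝒦, ∀ B ∈ 𝒦, A ≠ B → Intersects A B → interDim A B = d - 1) (p : Fin d → ℝ) :
    #(boxesAt 𝒦 p) ≤ d + 1 := by
  have hpart : ∀ C C' : boxesAt 𝒦 p, C ≠ C' → ∃! k, TouchAt p C C' k := by
    rintro ⟨C, hC⟩ ⟨C', hC'⟩ hne
    obtain ⟨hC𝒦, hCp⟩ := mem_boxesAt.1 hC
    obtain ⟨hC'𝒦, hC'p⟩ := mem_boxesAt.1 hC'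
    have hne' : C ≠ C' := fun h => hne (Subtype.ext h)
    have hint : Intersects C C' := ⟨p, hCp, hC'p⟩
    have := hint.interDim_add_card_touch
    have := h𝒦.one_le_card_touch hC𝒦 hC'𝒦 hne' hint
    have := h C hC𝒦 C' hC'𝒦 hne' hint
    rw [Fintype.existsUnique_iff_card_one, ← filter_congr fun k _ =>
      touch_iff_touchAt (h𝒦.fullDim C hC𝒦) (h𝒦.fullDim C' hC'𝒦) hCp hC'p k]
    omega
  simpa using card_le_card_add_one_of_biclique_partition
    (fun k (C : boxesAt 𝒦 p) => C.1.lo k = p k) (fun k C => C.1.hi k = p k)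
    (fun k C ⟨hl, hh⟩ => (h𝒦.fullDim C (mem_boxesAt.1 C.2).1 k).ne (hl.trans hh.symm)) hpart

end IsSpaceTiling

end SpaceTiling

section Tiling

variable {d : ℕ}

theorem extBox_of_lt {i c : Fin d} (h : c < i) (s : Bool) :
    (extBox d i s).lo c = ((-1 : ℝ) : EReal) ∧ (extBox d i s).hi c = ((1 : ℝ) : EReal) := by
  simp only [extBox, if_pos h, and_self]

theorem extBox_of_gt {i c : Fin d} (h : i < c) (s : Bool) :
    (extBox d i s).lo c = ⊥ ∧ (extBox d i s).hi c = ⊤ := by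
  simp only [extBox, if_neg (not_lt_of_gt h), if_neg h.ne', and_self]

theorem extBox_self_false (i : Fin d) :
    (extBox d i false).lo i = ⊥ ∧ (extBox d i false).hi i = ((-1 : ℝ) : EReal) := by
  simp only [extBox, lt_self_iff_false, if_false, if_true, Bool.false_eq_true, and_self]

theorem extBox_self_true (i : Fin d) :
    (extBox d i true).lo i = ((1 : ℝ) : EReal) ∧ (extBox d i true).hi i = ⊤ := by
  simp only [extBox, lt_self_iff_false, if_false, if_true, and_self]

theorem extBox_fullDim (i : Fin d) (s : Bool) : (extBox d i s).FullDim := by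
  intro c
  rcases lt_trichotomy c i with h | rfl | h
  · rw [(extBox_of_lt h s).1, (extBox_of_lt h s).2, EReal.coe_lt_coe_iff]
    norm_num
  · cases s
    · rw [(extBox_self_false c).1, (extBox_self_false c).2]
      exact EReal.bot_lt_coe _
    · rw [(extBox_self_true c).1, (extBox_self_true c).2]
      exact EReal.coe_lt_top _
  · rw [(extBox_of_gt h s).1, (extBox_of_gt h s).2]
    exact bot_lt_top

theorem mem_extBox_iff {i : Fin d} {s : Bool} {q : Fin d → ℝ} :
    (extBox d i s).mem q ↔
      (∀ c < i, -1 ≤ q c ∧ q c ≤ 1) ∧ (if s then 1 ≤ q i else q i ≤ -1) := by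
  have hlt : ∀ c < i, (extBox d i s).lo c ≤ q c ∧ (q c : EReal) ≤ (extBox d i s).hi c ↔
      -1 ≤ q c ∧ q c ≤ 1 := fun c hc => by
    rw [(extBox_of_lt hc s).1, (extBox_of_lt hc s).2, EReal.coe_le_coe_iff, EReal.coe_le_coe_iff]
  have hself : (extBox d i s).lo i ≤ q i ∧ (q i : EReal) ≤ (extBox d i s).hi i ↔
      if s then 1 ≤ q i else q i ≤ -1 := by
    cases s
    · simp only [extBox_self_false, bot_le, EReal.coe_le_coe_iff, true_and, Bool.false_eq_true,
        if_false]
    · simp only [extBox_self_true, le_top, EReal.coe_le_coe_iff, and_true, if_true]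
  refine ⟨fun h => ⟨fun c hc => (hlt c hc).1 (h c), hself.1 (h i)⟩, fun ⟨h₁, h₂⟩ c => ?_⟩
  rcases lt_trichotomy c i with h | rfl | h
  · exact (hlt c h).2 (h₁ c h)
  · exact hself.2 h₂
  · rw [(extBox_of_gt h s).1, (extBox_of_gt h s).2]
    exact ⟨bot_le, le_top⟩

theorem extBox_interior {i : Fin d} {s : Bool} {z : Fin d → ℝ}
    (hz : z ∈ (extBox d i s).interior) :
    (∀ c < i, -1 < z c ∧ z c < 1) ∧ (if s then 1 < z i else z i < -1) := by
  refine ⟨fun c hc => ?_, ?_⟩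
  · simpa only [(extBox_of_lt hc s).1, (extBox_of_lt hc s).2, EReal.coe_lt_coe_iff] using hz c
  · cases s
    · simpa only [extBox_self_false, EReal.coe_lt_coe_iff, Bool.false_eq_true, if_false]
        using (hz i).2
    · simpa only [extBox_self_true, EReal.coe_lt_coe_iff, if_true] using (hz i).1

theorem not_mem_cube_of_mem_extBox_interior {i : Fin d} {s : Bool} {z : Fin d → ℝ}
    (hz : z ∈ (extBox d i s).interior) : z ∉ cube d := fun hcube => by
  have := (extBox_interior hz).2
  have := hcube i
  cases s <;> simp only [Bool.false_eq_true, if_true, if_false] at * <;> linarith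

theorem disjoint_extBox_interior_of_lt {i i' : Fin d} (h : i < i') (s s' : Bool) :
    Disjoint (extBox d i s).interior (extBox d i' s').interior :=
  Set.disjoint_left.2 fun z hz hz' => by
    have h₁ := (extBox_interior hz).2
    have h₂ := (extBox_interior hz').1 i h
    cases s <;> simp only [Bool.false_eq_true, if_true, if_false] at h₁ <;> linarith

theorem not_intersects_extBox_not (i : Fin d) (s : Bool) :
    ¬ Intersects (extBox d i s) (extBox d i !s) := by
  rintro ⟨q, h, h'⟩
  have h₁ := (mem_extBox_iff.1 h).2
  have h₂ := (mem_extBox_iff.1 h').2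
  cases s <;> simp only [Bool.not_true, Bool.not_false, Bool.false_eq_true, if_true,
    if_false] at h₁ h₂ <;> linarith

theorem interDim_extBox {A : Box d} (hA : A.FullDim) {i : Fin d} {s : Bool}
    (hbd : ∀ c ≤ i, ((-1 : ℝ) : EReal) ≤ A.lo c ∧ A.hi c ≤ ((1 : ℝ) : EReal))
    (h : Intersects A (extBox d i s)) :
    interDim A (extBox d i s) = d - 1 := by
  have htouch : univ.filter (Touch A (extBox d i s)) = {i} := by
    ext c
    simp only [mem_filter, mem_univ, true_and, mem_singleton, h.touch_iff]
    rcases lt_trichotomy c i with hc | rfl | hc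
    · rw [(extBox_of_lt hc s).1, (extBox_of_lt hc s).2, max_eq_left (hbd c hc.le).1,
        min_eq_left (hbd c hc.le).2]
      exact iff_of_false (not_not.2 (hA c)) hc.ne
    · refine iff_of_true (not_lt.2 ?_) rfl
      cases s
      · rw [(extBox_self_false c).1, (extBox_self_false c).2, max_bot_right]
        exact (min_le_right _ _).trans (hbd c le_rfl).1
      · rw [(extBox_self_true c).1, (extBox_self_true c).2, min_top_right]
        exact (hbd c le_rfl).2.trans (le_max_right _ _)
    · rw [(extBox_of_gt hc s).1, (extBox_of_gt hc s).2, max_bot_right, min_top_right]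
      exact iff_of_false (not_not.2 (hA c)) hc.ne'
  have := h.interDim_add_card_touch
  rw [htouch, card_singleton] at this
  omega

variable {𝒯 : Finset (Box d)}

theorem IsTiling.neg_one_le_lo_and_hi_le_one (hT : IsTiling 𝒯) {A : Box d} (hA : A ∈ 𝒯)
    (c : Fin d) :
    ((-1 : ℝ) : EReal) ≤ A.lo c ∧ A.hi c ≤ ((1 : ℝ) : EReal) := by
  obtain ⟨z, hz⟩ := (hT.1 A hA).exists_mem
  have hcube : ∀ y : ℝ, A.lo c ≤ y → (y : EReal) ≤ A.hi c → -1 ≤ y ∧ y ≤ 1 := fun y hlo hhi => by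
    simpa using hT.2.1 A hA (Box.mem_update hz hlo hhi) c
  constructor
  · by_contra! h
    obtain ⟨y, h₁, h₂⟩ := EReal.exists_between_coe_real (lt_min h (hT.1 A hA c))
    have := (hcube y h₁.le (h₂.trans_le (min_le_right _ _)).le).1
    linarith [EReal.coe_lt_coe_iff.1 (h₂.trans_le (min_le_left _ _))]
  · by_contra! h
    obtain ⟨y, h₁, h₂⟩ := EReal.exists_between_coe_real (max_lt h (hT.1 A hA c))
    have := (hcube y ((le_max_right _ _).trans h₁.le) h₂.le).2
    linarith [EReal.coe_lt_coe_iff.1 ((le_max_left _ _).trans_lt h₁)]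

theorem IsTiling.isSpaceTiling_withExt (hT : IsTiling 𝒯) : IsSpaceTiling (withExt 𝒯) where
  fullDim B hB := by
    rcases mem_union.1 hB with hB | hB
    · exact hT.1 B hB
    · obtain ⟨⟨i, s⟩, -, rfl⟩ := mem_image.1 hB
      exact extBox_fullDim i s
  disjoint_interior A hA B hB hne := by
    have hext : ∀ A ∈ 𝒯, ∀ i s, Disjoint A.interior (extBox d i s).interior :=
      fun A hA i s => Set.disjoint_left.2 fun z hz hz' =>
        not_mem_cube_of_mem_extBox_interior hz' (hT.2.1 A hA (A.interior_subset_toSet hz))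
    rcases mem_union.1 hA with hA | hA <;> rcases mem_union.1 hB with hB | hB
    · exact Set.disjoint_iff_inter_eq_empty.2 (hT.2.2.1 A hA B hB hne)
    · obtain ⟨⟨i, s⟩, -, rfl⟩ := mem_image.1 hB
      exact hext A hA i s
    · obtain ⟨⟨i, s⟩, -, rfl⟩ := mem_image.1 hA
      exact (hext B hB i s).symm
    · obtain ⟨⟨i, s⟩, -, rfl⟩ := mem_image.1 hA
      obtain ⟨⟨i', s'⟩, -, rfl⟩ := mem_image.1 hB
      rcases lt_trichotomy i i' with h | rfl | h
      · exact disjoint_extBox_interior_of_lt h s s'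
      · obtain rfl : s' = !s := by cases s <;> cases s' <;> simp_all
        exact Set.disjoint_left.2 fun z hz hz' => not_intersects_extBox_not i s
          ⟨z, Box.interior_subset_toSet _ hz, Box.interior_subset_toSet _ hz'⟩
      · exact (disjoint_extBox_interior_of_lt h s' s).symm
  exists_mem q := by
    by_cases hq : q ∈ cube d
    · obtain ⟨B, hB, hBq⟩ := hT.2.2.2 q hq
      exact ⟨B, mem_union_left _ hB, hBq⟩
    obtain ⟨i, hi, hmin⟩ := wellFounded_lt.has_min {c | ¬ (-1 ≤ q c ∧ q c ≤ 1)}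
      (not_forall.1 hq)
    refine ⟨extBox d i (decide (1 < q i)),
      mem_union_right _ (mem_image.2 ⟨(i, _), mem_univ _, rfl⟩),
      mem_extBox_iff.2 ⟨fun c hc => not_not.1 fun h => hmin c h hc, ?_⟩⟩
    by_cases h : 1 < q i
    · simp only [h, decide_true, if_true, h.le]
    · simp only [h, decide_false, Bool.false_eq_true, if_false]
      by_contra h'
      exact hi ⟨by linarith, by linarith⟩

theorem IsTiling.interDim_eq_of_proper (hT : IsTiling 𝒯) (hP : Proper 𝒯) {A B : Box d}
    (hA : A ∈ withExt 𝒯) (hB : B ∈ withExt 𝒯) (hne : A ≠ B) (h : Intersects A B) :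
    interDim A B = d - 1 := by
  have hext_bd : ∀ {i i' : Fin d} (s : Bool), i < i' → ∀ c ≤ i,
      ((-1 : ℝ) : EReal) ≤ (extBox d i' s).lo c ∧ (extBox d i' s).hi c ≤ ((1 : ℝ) : EReal) :=
    fun s h c hc => by
      rw [(extBox_of_lt (hc.trans_lt h) s).1, (extBox_of_lt (hc.trans_lt h) s).2]
      exact ⟨le_rfl, le_rfl⟩
  rcases mem_union.1 hA with hA | hA <;> rcases mem_union.1 hB with hB | hB
  · exact hT.isSpaceTiling_withExt.interDim_eq_of_card_boxesAt_le hP (mem_union_left _ hA)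
      (fun c => ((hT.neg_one_le_lo_and_hi_le_one hA c).2.trans_lt (EReal.coe_lt_top 1)).ne)
      (mem_union_left _ hB) hne h
  · obtain ⟨⟨i, s⟩, -, rfl⟩ := mem_image.1 hB
    exact interDim_extBox (hT.1 A hA) (fun c _ => hT.neg_one_le_lo_and_hi_le_one hA c) h
  · obtain ⟨⟨i, s⟩, -, rfl⟩ := mem_image.1 hA
    rw [interDim_comm]
    exact interDim_extBox (hT.1 B hB) (fun c _ => hT.neg_one_le_lo_and_hi_le_one hB c) h.symm
  · obtain ⟨⟨i, s⟩, -, rfl⟩ := mem_image.1 hA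
    obtain ⟨⟨i', s'⟩, -, rfl⟩ := mem_image.1 hB
    rcases lt_trichotomy i i' with hii | rfl | hii
    · rw [interDim_comm]
      exact interDim_extBox (extBox_fullDim i' s') (hext_bd s' hii) h.symm
    · obtain rfl : s' = !s := by cases s <;> cases s' <;> simp_all
      exact absurd h (not_intersects_extBox_not i s)
    · exact interDim_extBox (extBox_fullDim i s) (hext_bd s hii) h

end Tiling

/-- A `d`-tiling `T` is proper if and only if any two intersecting
boxes `A, B` of `T ∪ T_ext` satisfy `dim(A ∩ B) = d - 1`. -/
theorem stmt6 (d : ℕ) (𝒯 : Finset (Box d)) (hT : IsTiling 𝒯) :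
    Proper 𝒯 ↔
      ∀ A ∈ withExt 𝒯, ∀ B ∈ withExt 𝒯, A ≠ B → Intersects A B →
        interDim A B = d - 1 :=
  ⟨fun hP _ hA _ hB => hT.interDim_eq_of_proper hP hA hB,
    hT.isSpaceTiling_withExt.card_boxesAt_le⟩

end
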